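/- arXiv:2406.19715 — 2 statements merged into one kernel-verified Lean document; each statement's English description precedes it below -/
import Mathlib

section
/- For all integers n ≥ 1 and r ≥ 0: p_B(n, 2r) = (n−1)! · 2^n · C(n−1, r) · (2r+1) and p_B(n, 2r+1) = n! · 2^n · C(n−1, r), where C denotes the ordinary binomial coefficient. -/
/-- The height after step `i` of the path encoded by `(β, γ)`:
`h_i = ∑_{j=1}^{i} (1 - β j - γ j)` in `ℤ` (so `h_0 = 0`). -/
def bHeight (β γ : ℕ → ℕ) (i : ℕ) : ℤ :=
  ∑ j ∈ Finset.Icc 1 i, (1 - (β j : ℤ) - (γ j : ℤ))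

/-- A type-B (1,2)-datum of length `n`: sequences `α β γ : {1,…,n} → ℕ` (encoded as
functions `ℕ → ℕ` vanishing outside `{1,…,n}`) with `β i, γ i ∈ {0,1}`, heights
`h_i ≥ 0` for all `i ∈ {1,…,n}`, and `α_i ≤ h_{i-1} + h_i` for all `i ∈ {1,…,n}`. -/
def IsBDatum (n : ℕ) (α β γ : ℕ → ℕ) : Prop :=
  (∀ i, i ∉ Finset.Icc 1 n → α i = 0 ∧ β i = 0 ∧ γ i = 0) ∧
  (∀ i ∈ Finset.Icc 1 n, β i ≤ 1 ∧ γ i ≤ 1) ∧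
  (∀ i ∈ Finset.Icc 1 n, 0 ≤ bHeight β γ i) ∧
  (∀ i ∈ Finset.Icc 1 n, (α i : ℤ) ≤ bHeight β γ (i - 1) + bHeight β γ i)

/-- `pB n r`: the total number of type-B (1,2)-data of length `n` with
`h_{n-1} + h_n = r`. -/
noncomputable def pB (n : ℕ) (r : ℤ) : ℕ :=
  {t : (ℕ → ℕ) × (ℕ → ℕ) × (ℕ → ℕ) | IsBDatum n t.1 t.2.1 t.2.2 ∧
    bHeight t.2.1 t.2.2 (n - 1) + bHeight t.2.1 t.2.2 n = r}.ncard

namespace BAux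

abbrev Trip := (ℕ → ℕ) × (ℕ → ℕ) × (ℕ → ℕ)

/-- Data of length `n` ending at height `k`. -/
def Dset (n : ℕ) (k : ℤ) : Set Trip :=
  {t | IsBDatum n t.1 t.2.1 t.2.2 ∧ bHeight t.2.1 t.2.2 n = k}

/-- Extend a datum of length `n` by one step with data `(a, b, c)` at position `n+1`. -/
def ext (n a b c : ℕ) (t : Trip) : Trip :=
  (Function.update t.1 (n+1) a, Function.update t.2.1 (n+1) b,
    Function.update t.2.2 (n+1) c)

@[simp] lemma bHeight_zero (β γ : ℕ → ℕ) : bHeight β γ 0 = 0 := by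
  simp [bHeight]

lemma bHeight_succ (β γ : ℕ → ℕ) (n : ℕ) :
    bHeight β γ (n+1) = bHeight β γ n + (1 - (β (n+1) : ℤ) - (γ (n+1) : ℤ)) := by
  unfold bHeight
  rw [Finset.sum_Icc_succ_top (by omega : 1 ≤ n + 1)]

lemma bHeight_update (β γ : ℕ → ℕ) (n b c : ℕ) {i : ℕ} (hi : i ≤ n) :
    bHeight (Function.update β (n+1) b) (Function.update γ (n+1) c) i
      = bHeight β γ i := by
  unfold bHeight
  refine Finset.sum_congr rfl fun j hj => ?_
  have hj' : j ≠ n+1 := by simp only [Finset.mem_Icc] at hj; omega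
  rw [Function.update_of_ne hj', Function.update_of_ne hj']

lemma bHeight_update_succ (β γ : ℕ → ℕ) (n b c : ℕ) :
    bHeight (Function.update β (n+1) b) (Function.update γ (n+1) c) (n+1)
      = bHeight β γ n + (1 - (b:ℤ) - (c:ℤ)) := by
  rw [bHeight_succ, bHeight_update β γ n b c le_rfl,
    Function.update_self, Function.update_self]

/-- Forward: extending a datum gives a datum. -/
lemma ext_mem {n : ℕ} {k' : ℤ} {t : Trip} (ht : t ∈ Dset n k') (a b c : ℕ)
    (hb : b ≤ 1) (hc : c ≤ 1)
    (h0 : 0 ≤ k' + (1 - (b:ℤ) - (c:ℤ)))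
    (ha : (a:ℤ) ≤ 2*k' + (1 - (b:ℤ) - (c:ℤ))) :
    ext n a b c t ∈ Dset (n+1) (k' + (1 - (b:ℤ) - (c:ℤ))) := by
  obtain ⟨⟨h1, h2, h3, h4⟩, hk⟩ := ht
  have hup : ∀ i ≤ n, bHeight (Function.update t.2.1 (n+1) b)
      (Function.update t.2.2 (n+1) c) i = bHeight t.2.1 t.2.2 i :=
    fun i hi => bHeight_update _ _ n b c hi
  have hupS : bHeight (Function.update t.2.1 (n+1) b)
      (Function.update t.2.2 (n+1) c) (n+1) = k' + (1 - (b:ℤ) - (c:ℤ)) := by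
    rw [bHeight_update_succ, hk]
  constructor
  · refine ⟨?_, ?_, ?_, ?_⟩
    · intro i hi
      have hi1 : i ≠ n+1 := fun h => hi (by simp [h, Finset.mem_Icc])
      have hi2 : i ∉ Finset.Icc 1 n := by
        simp only [Finset.mem_Icc] at hi ⊢; omega
      simp only [ext, Function.update_of_ne hi1]
      exact h1 i hi2
    · intro i hi
      by_cases hin : i = n+1
      · subst hin
        simp only [ext, Function.update_self]
        exact ⟨hb, hc⟩
      · have hi2 : i ∈ Finset.Icc 1 n := by
          simp only [Finset.mem_Icc] at hi ⊢; omega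
        simp only [ext, Function.update_of_ne hin]
        exact h2 i hi2
    · intro i hi
      by_cases hin : i = n+1
      · subst hin
        simp only [ext]
        rw [hupS]; exact h0
      · have hi2 : i ∈ Finset.Icc 1 n := by
          simp only [Finset.mem_Icc] at hi ⊢; omega
        have hile : i ≤ n := by simp only [Finset.mem_Icc] at hi2; omega
        simp only [ext]
        rw [hup i hile]
        exact h3 i hi2
    · intro i hi
      by_cases hin : i = n+1
      · subst hin
        simp only [ext, Function.update_self]
        rw [show n + 1 - 1 = n from rfl, hup n le_rfl, hk, hupS]
        linarith
      · have hi2 : i ∈ Finset.Icc 1 n := by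
          simp only [Finset.mem_Icc] at hi ⊢; omega
        have hile : i ≤ n := by simp only [Finset.mem_Icc] at hi2; omega
        simp only [ext, Function.update_of_ne hin]
        rw [hup i hile, hup (i-1) (by omega)]
        exact h4 i hi2
  · exact hupS

/-- Backward: any datum of length `n+1` is an extension of a datum of length `n`. -/
lemma succ_elim {n : ℕ} {t : Trip} (ht : IsBDatum (n+1) t.1 t.2.1 t.2.2) :
    ∃ t' : Trip, t' ∈ Dset n (bHeight t.2.1 t.2.2 n) ∧
      t = ext n (t.1 (n+1)) (t.2.1 (n+1)) (t.2.2 (n+1)) t' ∧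
      t.2.1 (n+1) ≤ 1 ∧ t.2.2 (n+1) ≤ 1 ∧
      bHeight t.2.1 t.2.2 (n+1)
        = bHeight t.2.1 t.2.2 n + (1 - (t.2.1 (n+1):ℤ) - (t.2.2 (n+1):ℤ)) ∧
      0 ≤ bHeight t.2.1 t.2.2 (n+1) ∧
      (t.1 (n+1) : ℤ) ≤ bHeight t.2.1 t.2.2 n + bHeight t.2.1 t.2.2 (n+1) := by
  obtain ⟨h1, h2, h3, h4⟩ := ht
  have hmem : n + 1 ∈ Finset.Icc 1 (n+1) := by simp [Finset.mem_Icc]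
  refine ⟨(Function.update t.1 (n+1) 0, Function.update t.2.1 (n+1) 0,
      Function.update t.2.2 (n+1) 0), ?_, ?_, (h2 _ hmem).1, (h2 _ hmem).2,
      bHeight_succ _ _ n, h3 _ hmem, by simpa using h4 _ hmem⟩
  · have hup : ∀ i ≤ n, bHeight (Function.update t.2.1 (n+1) 0)
        (Function.update t.2.2 (n+1) 0) i = bHeight t.2.1 t.2.2 i :=
      fun i hi => bHeight_update _ _ n 0 0 hi
    refine ⟨⟨?_, ?_, ?_, ?_⟩, hup n le_rfl⟩
    · intro i hi
      by_cases hin : i = n+1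
      · subst hin; simp
      · have : i ∉ Finset.Icc 1 (n+1) := by
          simp only [Finset.mem_Icc] at hi ⊢; omega
        simp only [Function.update_of_ne hin]
        exact h1 i this
    · intro i hi
      have hin : i ≠ n+1 := by simp only [Finset.mem_Icc] at hi; omega
      have : i ∈ Finset.Icc 1 (n+1) := by
        simp only [Finset.mem_Icc] at hi ⊢; omega
      simp only [Function.update_of_ne hin]
      exact h2 i this
    · intro i hi
      have hile : i ≤ n := by simp only [Finset.mem_Icc] at hi; omega
      have : i ∈ Finset.Icc 1 (n+1) := by
        simp only [Finset.mem_Icc] at hi ⊢; omega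
      rw [hup i hile]
      exact h3 i this
    · intro i hi
      have hile : i ≤ n := by simp only [Finset.mem_Icc] at hi; omega
      have hin : i ≠ n+1 := by omega
      have : i ∈ Finset.Icc 1 (n+1) := by
        simp only [Finset.mem_Icc] at hi ⊢; omega
      simp only [Function.update_of_ne hin]
      rw [hup i hile, hup (i-1) (by omega)]
      exact h4 i this
  · refine Prod.ext ?_ (Prod.ext ?_ ?_) <;>
      simp [ext, Function.update_idem, Function.update_eq_self]

lemma ext_injOn (n a b c : ℕ) (k : ℤ) : Set.InjOn (ext n a b c) (Dset n k) := by
  intro t ht t' ht' h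
  have z1 := (ht.1.1 (n+1) (by simp [Finset.mem_Icc]))
  have z2 := (ht'.1.1 (n+1) (by simp [Finset.mem_Icc]))
  have e1 := congrArg Prod.fst h
  have e2 := congrArg (fun x : Trip => x.2.1) h
  have e3 := congrArg (fun x : Trip => x.2.2) h
  refine Prod.ext ?_ (Prod.ext ?_ ?_) <;> funext i <;> by_cases hin : i = n+1
  · rw [hin, z1.1, z2.1]
  · have := congrFun e1 i
    simpa [ext, Function.update_of_ne hin] using this
  · rw [hin, z1.2.1, z2.2.1]
  · have := congrFun e2 i
    simpa [ext, Function.update_of_ne hin] using this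
  · rw [hin, z1.2.2, z2.2.2]
  · have := congrFun e3 i
    simpa [ext, Function.update_of_ne hin] using this

lemma ext_disjoint (n : ℕ) {a b c a' b' c' : ℕ} (h : ¬(a = a' ∧ b = b' ∧ c = c'))
    (s s' : Set Trip) : Disjoint (ext n a b c '' s) (ext n a' b' c' '' s') := by
  rw [Set.disjoint_left]
  rintro t ⟨u, -, rfl⟩ ⟨v, -, hv⟩
  apply h
  have e1 := congrFun (congrArg Prod.fst hv) (n+1)
  have e2 := congrFun (congrArg (fun x : Trip => x.2.1) hv) (n+1)
  have e3 := congrFun (congrArg (fun x : Trip => x.2.2) hv) (n+1)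
  simp only [ext, Function.update_self] at e1 e2 e3
  exact ⟨e1.symm, e2.symm, e3.symm⟩

/-- Index finset for the recurrence at ending height `m`. -/
def SfinF (m : ℕ) : Finset ((ℕ × ℕ) × ℕ) :=
  ((Finset.range 2 ×ˢ Finset.range 2).sigma
    (fun bc => Finset.range (2*m + bc.1 + bc.2))).map
    ⟨fun x => (x.1, x.2), (show Function.Injective (fun x : (_ : ℕ × ℕ) × ℕ => (x.1, x.2)) from fun x y h => by
      cases x; cases y; simp at h; simp [h.1, h.2])⟩

def extp (n : ℕ) (x : (ℕ × ℕ) × ℕ) : Trip → Trip := ext n x.2 x.1.1 x.1.2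

lemma mem_SfinF {m : ℕ} {x : (ℕ × ℕ) × ℕ} :
    x ∈ SfinF m ↔ x.1.1 < 2 ∧ x.1.2 < 2 ∧ x.2 < 2*m + x.1.1 + x.1.2 := by
  rcases x with ⟨⟨b, c⟩, a⟩
  simp [SfinF, Finset.mem_sigma, Finset.mem_product, and_assoc]

/-- The decomposition of `Dset (n+1) m` by the last step. -/
lemma Dset_succ_eq (n m : ℕ) :
    Dset (n+1) (m : ℤ) =
      ⋃ x ∈ SfinF m, extp n x '' Dset n ((m:ℤ) - (1 - (x.1.1:ℤ) - (x.1.2:ℤ))) := by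
  ext t
  simp only [Set.mem_iUnion, exists_prop]
  constructor
  · rintro ⟨ht, hk⟩
    obtain ⟨t', ht', hteq, hb, hc, hstep, -, ha⟩ := succ_elim ht
    refine ⟨((t.2.1 (n+1), t.2.2 (n+1)), t.1 (n+1)), ?_, t', ?_, hteq.symm⟩
    · rw [mem_SfinF]
      dsimp only
      rw [hk] at hstep ha
      refine ⟨by omega, by omega, ?_⟩
      have hbh : bHeight t.2.1 t.2.2 n
          = (m:ℤ) - (1 - (t.2.1 (n+1):ℤ) - (t.2.2 (n+1):ℤ)) := by omega
      rw [hbh] at ha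
      omega
    · have hbh : bHeight t.2.1 t.2.2 n
        = (m:ℤ) - (1 - (t.2.1 (n+1):ℤ) - (t.2.2 (n+1):ℤ)) := by
        rw [hk] at hstep; omega
      rwa [hbh] at ht'
  · rintro ⟨x, hx, t', ht', rfl⟩
    rw [mem_SfinF] at hx
    have := ext_mem ht' x.2 x.1.1 x.1.2 (by omega) (by omega)
      (by omega) (by omega)
    have heq : (m:ℤ) - (1 - (x.1.1:ℤ) - (x.1.2:ℤ)) + (1 - (x.1.1:ℤ) - (x.1.2:ℤ))
        = (m:ℤ) := by ring
    rw [heq] at this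
    exact this

lemma Dset_neg {n : ℕ} {k : ℤ} (hk : k < 0) : Dset n k = ∅ := by
  ext t
  simp only [Set.mem_empty_iff_false, iff_false]
  rintro ⟨ht, hkk⟩
  cases n with
  | zero => simp at hkk; omega
  | succ n =>
    have := ht.2.2.1 (n+1) (by simp [Finset.mem_Icc])
    rw [hkk] at this; omega

lemma Dset_zero_eq (k : ℤ) :
    Dset 0 k = if k = 0 then {(((fun _ => 0), (fun _ => 0), fun _ => 0) : Trip)}
      else ∅ := by
  ext t
  constructor
  · rintro ⟨⟨h1, -, -, -⟩, hk⟩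
    rw [show bHeight t.2.1 t.2.2 0 = 0 from bHeight_zero _ _] at hk
    rw [if_pos hk.symm]
    have : ∀ i, t.1 i = 0 ∧ t.2.1 i = 0 ∧ t.2.2 i = 0 := fun i => h1 i (by simp)
    simp only [Set.mem_singleton_iff]
    refine Prod.ext ?_ (Prod.ext ?_ ?_) <;> funext i
    · exact (this i).1
    · exact (this i).2.1
    · exact (this i).2.2
  · intro ht
    by_cases hk : k = 0
    · rw [if_pos hk] at ht
      rw [Set.mem_singleton_iff] at ht
      subst ht hk
      exact ⟨⟨fun i _ => ⟨rfl, rfl, rfl⟩, fun i hi => by simp at hi,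
        fun i hi => by simp at hi, fun i hi => by simp at hi⟩, by simp⟩
    · rw [if_neg hk] at ht
      exact absurd ht (Set.notMem_empty t)

lemma Dset_finite (n : ℕ) (k : ℤ) : (Dset n k).Finite := by
  induction n generalizing k with
  | zero =>
    rw [Dset_zero_eq]
    split <;> simp
  | succ n ih =>
    rcases lt_or_ge k 0 with hk | hk
    · rw [Dset_neg hk]; exact Set.finite_empty
    · obtain ⟨m, rfl⟩ := Int.eq_ofNat_of_zero_le hk
      rw [Dset_succ_eq]
      exact Set.Finite.biUnion (SfinF m).finite_toSet
        (fun x _ => (ih _).image _)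

noncomputable def F (n : ℕ) (k : ℤ) : ℕ := (Dset n k).ncard

lemma ncard_biUnion {ι β : Type*} (S : Finset ι) (f : ι → Set β)
    (hf : ∀ i ∈ S, (f i).Finite)
    (hd : ∀ i ∈ S, ∀ j ∈ S, i ≠ j → Disjoint (f i) (f j)) :
    (⋃ i ∈ S, f i).ncard = ∑ i ∈ S, (f i).ncard := by
  classical
  induction S using Finset.induction_on with
  | empty => simp
  | @insert a s ha ih =>
    have hfin2 : (⋃ i ∈ s, f i).Finite := by
      rw [← Finset.set_biUnion_coe]
      exact Set.Finite.biUnion s.finite_toSet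
        (fun i hi => hf i (Finset.mem_insert_of_mem hi))
    have hdisj : Disjoint (f a) (⋃ i ∈ s, f i) := by
      rw [Set.disjoint_iUnion₂_right]
      intro i hi
      exact hd a (Finset.mem_insert_self a s) i (Finset.mem_insert_of_mem hi)
        (fun h => ha (h ▸ hi))
    rw [Finset.sum_insert ha, Finset.set_biUnion_insert,
      Set.ncard_union_eq hdisj (hf a (Finset.mem_insert_self a s)) hfin2,
      ih (fun i hi => hf i (Finset.mem_insert_of_mem hi))
        (fun i hi j hj hij => hd i (Finset.mem_insert_of_mem hi) j
          (Finset.mem_insert_of_mem hj) hij)]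

lemma F_succ (n m : ℕ) :
    F (n+1) (m:ℤ) = 2*m * F n ((m:ℤ)-1) + 2*(2*m+1) * F n (m:ℤ)
      + (2*m+2) * F n ((m:ℤ)+1) := by
  unfold F
  rw [Dset_succ_eq]
  have hbu := ncard_biUnion (SfinF m)
    (fun x => extp n x '' Dset n ((m:ℤ) - (1 - (x.1.1:ℤ) - (x.1.2:ℤ))))
    (fun x _ => (Dset_finite _ _).image _)
    (fun x _ y _ hxy => ext_disjoint n (fun h => hxy (by
      rcases x with ⟨⟨b,c⟩,a⟩; rcases y with ⟨⟨b',c'⟩,a'⟩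
      obtain ⟨h1, h2, h3⟩ := h
      simp only at h1 h2 h3
      simp [h1, h2, h3])) _ _)
  rw [hbu]
  have hcard : ∀ x ∈ SfinF m, (extp n x '' Dset n ((m:ℤ) - (1 - (x.1.1:ℤ) - (x.1.2:ℤ)))).ncard
      = (Dset n ((m:ℤ) - (1 - (x.1.1:ℤ) - (x.1.2:ℤ)))).ncard := by
    intro x _
    exact Set.ncard_image_of_injOn (ext_injOn n _ _ _ _)
  rw [Finset.sum_congr rfl hcard]
  unfold SfinF
  rw [Finset.sum_map]
  rw [Finset.sum_sigma]
  rw [Finset.sum_product]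
  simp only [Finset.sum_range_succ, Finset.sum_range_zero, Finset.sum_const,
    Finset.card_range, smul_eq_mul]
  have e1 : (m:ℤ) - (1 - 0 - 0) = (m:ℤ) - 1 := by ring
  have e2 : (m:ℤ) - (1 - 0 - 1) = (m:ℤ) := by ring
  have e3 : (m:ℤ) - (1 - 1 - 0) = (m:ℤ) := by ring
  have e4 : (m:ℤ) - (1 - 1 - 1) = (m:ℤ) + 1 := by ring
  simp only [Function.Embedding.coeFn_mk, Nat.cast_zero, Nat.cast_one,
    Finset.sum_const, Finset.card_range, smul_eq_mul, e1, e2, e3, e4]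
  ring

lemma choose_id (n m : ℕ) :
    (n+1) * (n+1).choose (m+1)
      = (m+1) * n.choose m + (2*m+3) * n.choose (m+1) + (m+2) * n.choose (m+2) := by
  have h1 : (m+1) * n.choose m + (m+1) * n.choose (m+1)
      = (m+1) * (n+1).choose (m+1) := by
    rw [Nat.choose_succ_succ, Nat.mul_add]
  have h2 : (m+2) * n.choose (m+1) + (m+2) * n.choose (m+2)
      = (m+2) * (n+1).choose (m+2) := by
    rw [Nat.choose_succ_succ (n := n) (k := m+1), Nat.mul_add]
  have h3 : (n+1).choose (m+2) * (m+2) = (n+1).choose (m+1) * (n+1 - (m+1)) :=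
    Nat.choose_succ_right_eq (n+1) (m+1)
  rcases le_or_gt m n with hmn | hmn
  · symm
    calc (m+1) * n.choose m + (2*m+3) * n.choose (m+1) + (m+2) * n.choose (m+2)
        = ((m+1) * n.choose m + (m+1) * n.choose (m+1))
          + ((m+2) * n.choose (m+1) + (m+2) * n.choose (m+2)) := by ring
      _ = (m+1) * (n+1).choose (m+1) + (m+2) * (n+1).choose (m+2) := by
          rw [h1, h2]
      _ = (m+1) * (n+1).choose (m+1) + (n+1).choose (m+1) * (n+1-(m+1)) := by
          rw [mul_comm (m+2), h3]
      _ = (m+1) * (n+1).choose (m+1) + (n-m) * (n+1).choose (m+1) := by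
          rw [mul_comm ((n+1).choose (m+1))]
          congr 2
          omega
      _ = (m+1 + (n-m)) * (n+1).choose (m+1) := by ring
      _ = (n+1) * (n+1).choose (m+1) := by congr 1; omega
  · rw [Nat.choose_eq_zero_of_lt (by omega), Nat.choose_eq_zero_of_lt (by omega),
      Nat.choose_eq_zero_of_lt (by omega), Nat.choose_eq_zero_of_lt (by omega)]
    simp

lemma F_closed (n : ℕ) : ∀ m : ℕ, F n (m:ℤ) = n.factorial * 2^n * n.choose m := by
  induction n with
  | zero =>
    intro m
    unfold F
    rw [Dset_zero_eq]
    cases m with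
    | zero => simp
    | succ m =>
      rw [if_neg (by omega)]
      simp [Nat.choose_eq_zero_of_lt]
  | succ n ih =>
    intro m
    rw [F_succ]
    cases m with
    | zero =>
      simp only [Nat.cast_zero, mul_zero, zero_mul, zero_sub, zero_add, mul_one]
      rw [show (1:ℤ) = ((1:ℕ):ℤ) by norm_num, show (0:ℤ) = ((0:ℕ):ℤ) by norm_num,
        ih 0, ih 1]
      simp only [Nat.choose_zero_right, Nat.choose_one_right, mul_one,
        Nat.factorial_succ]
      ring
    | succ m =>
      have e1 : ((m+1:ℕ):ℤ) - 1 = ((m:ℕ):ℤ) := by push_cast; ring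
      have e2 : ((m+1:ℕ):ℤ) + 1 = ((m+2:ℕ):ℤ) := by push_cast; ring
      rw [e1, e2, ih m, ih (m+1), ih (m+2)]
      have key := choose_id n m
      have expand : 2*(m+1) * (n.factorial * 2^n * n.choose m)
          + 2*(2*(m+1)+1) * (n.factorial * 2^n * n.choose (m+1))
          + (2*(m+1)+2) * (n.factorial * 2^n * n.choose (m+2))
          = (n.factorial * 2^(n+1)) *
            ((m+1) * n.choose m + (2*m+3) * n.choose (m+1) + (m+2) * n.choose (m+2)) := by
        ring
      rw [expand, ← key]
      rw [Nat.factorial_succ]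
      ring

/-- The set counted by `pB`. -/
def Pset (n : ℕ) (r : ℤ) : Set Trip :=
  {t : Trip | IsBDatum n t.1 t.2.1 t.2.2 ∧
    bHeight t.2.1 t.2.2 (n - 1) + bHeight t.2.1 t.2.2 n = r}

lemma pB_eq (n : ℕ) (r : ℤ) : pB n r = (Pset n r).ncard := rfl

lemma Pset_even (m k : ℕ) :
    Pset (m+1) (2*(k:ℤ)) =
      ⋃ x ∈ (({(0,1),(1,0)} : Finset (ℕ×ℕ)) ×ˢ Finset.range (2*k+1)),
        extp m x '' Dset m (k : ℤ) := by
  ext t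
  simp only [Set.mem_iUnion, exists_prop]
  constructor
  · rintro ⟨ht, hsum⟩
    rw [show m + 1 - 1 = m from rfl] at hsum
    obtain ⟨t', ht', hteq, hb, hc, hstep, hpos, ha⟩ := succ_elim ht
    have hbc : t.2.1 (m+1) + t.2.2 (m+1) = 1 := by omega
    have hkm : bHeight t.2.1 t.2.2 m = (k:ℤ) := by omega
    refine ⟨((t.2.1 (m+1), t.2.2 (m+1)), t.1 (m+1)), ?_, t', ?_, hteq.symm⟩
    · simp only [Finset.mem_product, Finset.mem_insert, Finset.mem_singleton,
        Finset.mem_range, Prod.mk.injEq]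
      constructor
      · omega
      · omega
    · rwa [hkm] at ht'
  · rintro ⟨x, hx, t', ht', rfl⟩
    simp only [Finset.mem_product, Finset.mem_insert, Finset.mem_singleton,
      Finset.mem_range] at hx
    have hx1 : x.1.1 = 0 ∧ x.1.2 = 1 ∨ x.1.1 = 1 ∧ x.1.2 = 0 := by
      rcases hx.1 with h | h <;> simp [h]
    have hxa := hx.2
    have hb : x.1.1 ≤ 1 := by omega
    have hc : x.1.2 ≤ 1 := by omega
    have hs : (1 - (x.1.1:ℤ) - (x.1.2:ℤ)) = 0 := by omega
    have hmem := ext_mem ht' x.2 x.1.1 x.1.2 hb hc (by omega) (by omega)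
    rw [hs, add_zero] at hmem
    refine ⟨hmem.1, ?_⟩
    have h1 : bHeight (Function.update t'.2.1 (m+1) x.1.1)
        (Function.update t'.2.2 (m+1) x.1.2) m
        = bHeight t'.2.1 t'.2.2 m := bHeight_update _ _ m _ _ le_rfl
    have h2 := hmem.2
    simp only [ext] at h2
    simp only [extp, ext]
    rw [show m + 1 - 1 = m from rfl, h1, ht'.2, h2]
    ring

lemma Pset_odd (m k : ℕ) :
    Pset (m+1) (2*(k:ℤ)+1) =
      ⋃ x ∈ (({(0,0),(1,1)} : Finset (ℕ×ℕ)) ×ˢ Finset.range (2*k+2)),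
        extp m x '' Dset m ((k:ℤ) + x.1.1) := by
  ext t
  simp only [Set.mem_iUnion, exists_prop]
  constructor
  · rintro ⟨ht, hsum⟩
    rw [show m + 1 - 1 = m from rfl] at hsum
    obtain ⟨t', ht', hteq, hb, hc, hstep, hpos, ha⟩ := succ_elim ht
    have hkm : bHeight t.2.1 t.2.2 m = (k:ℤ) + (t.2.1 (m+1) : ℤ) := by omega
    refine ⟨((t.2.1 (m+1), t.2.2 (m+1)), t.1 (m+1)), ?_, t', ?_, hteq.symm⟩
    · simp only [Finset.mem_product, Finset.mem_insert, Finset.mem_singleton,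
        Finset.mem_range, Prod.mk.injEq]
      constructor
      · omega
      · omega
    · rwa [hkm] at ht'
  · rintro ⟨x, hx, t', ht', rfl⟩
    simp only [Finset.mem_product, Finset.mem_insert, Finset.mem_singleton,
      Finset.mem_range] at hx
    have hx1 : x.1.1 = 0 ∧ x.1.2 = 0 ∨ x.1.1 = 1 ∧ x.1.2 = 1 := by
      rcases hx.1 with h | h <;> simp [h]
    have hxa := hx.2
    have hb : x.1.1 ≤ 1 := by omega
    have hc : x.1.2 ≤ 1 := by omega
    have hmem := ext_mem ht' x.2 x.1.1 x.1.2 hb hc (by omega) (by omega)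
    refine ⟨hmem.1, ?_⟩
    have h1 : bHeight (Function.update t'.2.1 (m+1) x.1.1)
        (Function.update t'.2.2 (m+1) x.1.2) m
        = bHeight t'.2.1 t'.2.2 m := bHeight_update _ _ m _ _ le_rfl
    have h2 := hmem.2
    simp only [ext] at h2
    simp only [extp, ext]
    rw [show m + 1 - 1 = m from rfl, h1, ht'.2, h2]
    omega

lemma pB_even (m k : ℕ) : pB (m+1) (2*(k:ℤ)) = 2*(2*k+1) * F m (k:ℤ) := by
  rw [pB_eq, Pset_even]
  have hbu := ncard_biUnion (({(0,1),(1,0)} : Finset (ℕ×ℕ)) ×ˢ Finset.range (2*k+1))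
    (fun x => extp m x '' Dset m (k:ℤ))
    (fun x _ => (Dset_finite _ _).image _)
    (fun x _ y _ hxy => ext_disjoint m (fun h => hxy (by
      rcases x with ⟨⟨b,c⟩,a⟩; rcases y with ⟨⟨b',c'⟩,a'⟩
      obtain ⟨h1, h2, h3⟩ := h
      simp only at h1 h2 h3
      simp [h1, h2, h3])) _ _)
  rw [hbu]
  have hcard : ∀ x ∈ (({(0,1),(1,0)} : Finset (ℕ×ℕ)) ×ˢ Finset.range (2*k+1)),
      (extp m x '' Dset m (k:ℤ)).ncard = F m (k:ℤ) :=
    fun x _ => Set.ncard_image_of_injOn (ext_injOn m _ _ _ _)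
  rw [Finset.sum_congr rfl hcard, Finset.sum_const, Finset.card_product,
    Finset.card_range, smul_eq_mul]
  have : (({(0,1),(1,0)} : Finset (ℕ×ℕ))).card = 2 := by decide
  rw [this]

lemma pB_odd (m k : ℕ) :
    pB (m+1) (2*(k:ℤ)+1) = (2*k+2) * F m (k:ℤ) + (2*k+2) * F m ((k:ℤ)+1) := by
  rw [pB_eq, Pset_odd]
  have hbu := ncard_biUnion (({(0,0),(1,1)} : Finset (ℕ×ℕ)) ×ˢ Finset.range (2*k+2))
    (fun x => extp m x '' Dset m ((k:ℤ) + x.1.1))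
    (fun x _ => (Dset_finite _ _).image _)
    (fun x _ y _ hxy => ext_disjoint m (fun h => hxy (by
      rcases x with ⟨⟨b,c⟩,a⟩; rcases y with ⟨⟨b',c'⟩,a'⟩
      obtain ⟨h1, h2, h3⟩ := h
      simp only at h1 h2 h3
      simp [h1, h2, h3])) _ _)
  rw [hbu]
  have hcard : ∀ x ∈ (({(0,0),(1,1)} : Finset (ℕ×ℕ)) ×ˢ Finset.range (2*k+2)),
      (extp m x '' Dset m ((k:ℤ) + x.1.1)).ncard = F m ((k:ℤ) + x.1.1) :=
    fun x _ => Set.ncard_image_of_injOn (ext_injOn m _ _ _ _)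
  rw [Finset.sum_congr rfl hcard, Finset.sum_product]
  rw [Finset.sum_insert (by decide), Finset.sum_singleton]
  simp only [Finset.sum_const, Finset.card_range, smul_eq_mul,
    Nat.cast_zero, Nat.cast_one, add_zero]

end BAux

/-- `pB(n,2r) = (n-1)!·2^n·C(n-1,r)·(2r+1)` and `pB(n,2r+1) = n!·2^n·C(n-1,r)`. -/
theorem pB_closed_form (n r : ℕ) (hn : 1 ≤ n) :
    pB n (2 * r) = (n - 1).factorial * 2 ^ n * (n - 1).choose r * (2 * r + 1) ∧
    pB n (2 * r + 1) = n.factorial * 2 ^ n * (n - 1).choose r := by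
  obtain ⟨m, rfl⟩ : ∃ m, n = m + 1 := ⟨n - 1, by omega⟩
  rw [show m + 1 - 1 = m from rfl]
  constructor
  · rw [BAux.pB_even m r, BAux.F_closed m r]
    ring
  · rw [show (2 * (r:ℤ) + 1) = 2*(r:ℤ)+1 from rfl, BAux.pB_odd m r,
      BAux.F_closed m r, show ((r:ℤ)+1) = ((r+1:ℕ):ℤ) by push_cast; ring,
      BAux.F_closed m (r+1)]
    have h2 : Nat.choose m r + Nat.choose m (r+1) = Nat.choose (m+1) (r+1) :=
      (Nat.choose_succ_succ (m) (r)).symm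
    have h : (m+1) * Nat.choose m r = Nat.choose (m+1) (r+1) * (r+1) :=
      Nat.add_one_mul_choose_eq m r
    calc (2*r+2) * (m.factorial * 2^m * m.choose r)
          + (2*r+2) * (m.factorial * 2^m * m.choose (r+1))
        = (2*(r+1)) * (m.factorial * 2^m) * (m.choose r + m.choose (r+1)) := by
          ring
      _ = (2*(r+1)) * (m.factorial * 2^m) * (m+1).choose (r+1) := by rw [h2]
      _ = (m.factorial * 2^(m+1)) * ((m+1).choose (r+1) * (r+1)) := by ring
      _ = (m.factorial * 2^(m+1)) * ((m+1) * m.choose r) := by rw [← h]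
      _ = (m+1).factorial * 2^(m+1) * m.choose r := by
          rw [Nat.factorial_succ]; ring
end

section
/- For all integers n ≥ 2 and r ≥ 0, the counts p_E, p_U, p_D of type-B (1,2)-data satisfy the recurrences: p_E(n,r) = 2(r+1) · ( p_E(n−1, r) + p_U(n−1, r−1) + p_D(n−1, r+1) ); p_U(n,r) = (r+1) · ( p_E(n−1, r−1) + p_U(n−1, r−2) + p_D(n−1, r) ); and p_D(n,r) = (r+1) · ( p_E(n−1, r+1) + p_U(n−1, r) + p_D(n−1, r+2) ), with the convention p_E(m, s) = p_U(m, s) = p_D(m, s) := 0 for s < 0. -/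
/-- `pE n r`: the number of type-B (1,2)-data of length `n` with
`h_{n-1} + h_n = r` whose last step is a horizontal step (`β_n + γ_n = 1`).
(The count is `0` for `r < 0`, matching the convention.) -/
noncomputable def pE (n : ℕ) (r : ℤ) : ℕ :=
  {t : (ℕ → ℕ) × (ℕ → ℕ) × (ℕ → ℕ) | IsBDatum n t.1 t.2.1 t.2.2 ∧
    bHeight t.2.1 t.2.2 (n - 1) + bHeight t.2.1 t.2.2 n = r ∧
    t.2.1 n + t.2.2 n = 1}.ncard

/-- `pU n r`: the number of type-B (1,2)-data of length `n` with
`h_{n-1} + h_n = r` whose last step is an up-step (`β_n = γ_n = 0`). -/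
noncomputable def pU (n : ℕ) (r : ℤ) : ℕ :=
  {t : (ℕ → ℕ) × (ℕ → ℕ) × (ℕ → ℕ) | IsBDatum n t.1 t.2.1 t.2.2 ∧
    bHeight t.2.1 t.2.2 (n - 1) + bHeight t.2.1 t.2.2 n = r ∧
    t.2.1 n = 0 ∧ t.2.2 n = 0}.ncard

/-- `pD n r`: the number of type-B (1,2)-data of length `n` with
`h_{n-1} + h_n = r` whose last step is a down-step (`β_n = γ_n = 1`). -/
noncomputable def pD (n : ℕ) (r : ℤ) : ℕ :=
  {t : (ℕ → ℕ) × (ℕ → ℕ) × (ℕ → ℕ) | IsBDatum n t.1 t.2.1 t.2.2 ∧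
    bHeight t.2.1 t.2.2 (n - 1) + bHeight t.2.1 t.2.2 n = r ∧
    t.2.1 n = 1 ∧ t.2.2 n = 1}.ncard

abbrev Triple := (ℕ → ℕ) × (ℕ → ℕ) × (ℕ → ℕ)

lemma bHeight_succ (β γ : ℕ → ℕ) (i : ℕ) :
    bHeight β γ (i + 1) = bHeight β γ i + (1 - (β (i+1) : ℤ) - (γ (i+1) : ℤ)) := by
  unfold bHeight
  rw [← Finset.sum_Icc_succ_top (Nat.succ_le_succ (Nat.zero_le i))]

lemma bHeight_congr {β γ β' γ' : ℕ → ℕ} (i : ℕ)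
    (h : ∀ j, 1 ≤ j → j ≤ i → β j = β' j ∧ γ j = γ' j) :
    bHeight β γ i = bHeight β' γ' i := by
  unfold bHeight
  refine Finset.sum_congr rfl fun j hj => ?_
  simp only [Finset.mem_Icc] at hj
  rw [(h j hj.1 hj.2).1, (h j hj.1 hj.2).2]

lemma bHeight_le (β γ : ℕ → ℕ) (i : ℕ) : bHeight β γ i ≤ i := by
  unfold bHeight
  calc ∑ j ∈ Finset.Icc 1 i, (1 - (β j : ℤ) - (γ j : ℤ))
      ≤ ∑ _j ∈ Finset.Icc 1 i, (1 : ℤ) := by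
        refine Finset.sum_le_sum fun j _ => ?_
        have h1 : (0:ℤ) ≤ β j := Int.natCast_nonneg _
        have h2 : (0:ℤ) ≤ γ j := Int.natCast_nonneg _
        omega
    _ = i := by simp [Nat.card_Icc]

lemma bDatum_finite (m : ℕ) :
    {t : Triple | IsBDatum m t.1 t.2.1 t.2.2}.Finite := by
  have hbound : ∀ t ∈ {t : Triple | IsBDatum m t.1 t.2.1 t.2.2},
      ∀ i ∈ Finset.Icc 1 m, t.1 i ≤ 2*m ∧ t.2.1 i ≤ 1 ∧ t.2.2 i ≤ 1 := by
    rintro t ht i hi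
    refine ⟨?_, (ht.2.1 i hi).1, (ht.2.1 i hi).2⟩
    have h4 := ht.2.2.2 i hi
    have l1 := bHeight_le t.2.1 t.2.2 (i - 1)
    have l2 := bHeight_le t.2.1 t.2.2 i
    simp only [Finset.mem_Icc] at hi
    omega
  let F : Triple → ((Finset.Icc 1 m → Fin (2*m+1)) × (Finset.Icc 1 m → Fin 2) × (Finset.Icc 1 m → Fin 2)) :=
    fun t => (fun i => ⟨min (t.1 i.1) (2*m), Nat.lt_succ_of_le (Nat.min_le_right _ _)⟩,
              fun i => ⟨min (t.2.1 i.1) 1, Nat.lt_succ_of_le (Nat.min_le_right _ _)⟩,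
              fun i => ⟨min (t.2.2 i.1) 1, Nat.lt_succ_of_le (Nat.min_le_right _ _)⟩)
  refine Set.Finite.of_finite_image (f := F) (Set.toFinite _) ?_
  rintro t ht t2 ht2 h
  have hA := congrArg Prod.fst h
  have hB := congrArg (fun p => p.2.1) h
  have hC := congrArg (fun p => p.2.2) h
  simp only [F] at hA hB hC
  have e1 : t.1 = t2.1 := by
    funext i
    by_cases hi : i ∈ Finset.Icc 1 m
    · have := congrFun hA ⟨i, hi⟩
      simp only [Fin.mk.injEq] at this
      have b1 := (hbound t ht i hi).1
      have b2 := (hbound t2 ht2 i hi).1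
      omega
    · rw [(ht.1 i hi).1, (ht2.1 i hi).1]
  have e2 : t.2.1 = t2.2.1 := by
    funext i
    by_cases hi : i ∈ Finset.Icc 1 m
    · have := congrFun hB ⟨i, hi⟩
      simp only [Fin.mk.injEq] at this
      have b1 := (hbound t ht i hi).2.1
      have b2 := (hbound t2 ht2 i hi).2.1
      omega
    · rw [(ht.1 i hi).2.1, (ht2.1 i hi).2.1]
  have e3 : t.2.2 = t2.2.2 := by
    funext i
    by_cases hi : i ∈ Finset.Icc 1 m
    · have := congrFun hC ⟨i, hi⟩
      simp only [Fin.mk.injEq] at this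
      have b1 := (hbound t ht i hi).2.2
      have b2 := (hbound t2 ht2 i hi).2.2
      omega
    · rw [(ht.1 i hi).2.2, (ht2.1 i hi).2.2]
  exact Prod.ext_iff.2 ⟨e1, Prod.ext_iff.2 ⟨e2, e3⟩⟩

open Function in
lemma ext_mem (m : ℕ) (hm : 1 ≤ m) (r : ℕ) (b c : ℕ) (hb : b ≤ 1) (hc : c ≤ 1)
    (a : ℕ) (ha : a ≤ r) (t : Triple)
    (hd : IsBDatum m t.1 t.2.1 t.2.2)
    (hh : 2 * bHeight t.2.1 t.2.2 m = (r : ℤ) - (1 - b - c)) :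
    IsBDatum (m+1) (update t.1 (m+1) a) (update t.2.1 (m+1) b) (update t.2.2 (m+1) c) ∧
    bHeight (update t.2.1 (m+1) b) (update t.2.2 (m+1) c) m +
      bHeight (update t.2.1 (m+1) b) (update t.2.2 (m+1) c) (m+1) = (r : ℤ) := by
  have hcong : ∀ i, i ≤ m → bHeight (update t.2.1 (m+1) b) (update t.2.2 (m+1) c) i
      = bHeight t.2.1 t.2.2 i := by
    intro i hi
    refine bHeight_congr i fun j hj1 hj2 => ?_
    constructor <;> rw [Function.update_of_ne (by omega)]
  have hsucc : bHeight (update t.2.1 (m+1) b) (update t.2.2 (m+1) c) (m+1)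
      = bHeight t.2.1 t.2.2 m + (1 - (b:ℤ) - (c:ℤ)) := by
    rw [bHeight_succ, hcong m le_rfl]
    simp
  have hsum : bHeight (update t.2.1 (m+1) b) (update t.2.2 (m+1) c) m +
      bHeight (update t.2.1 (m+1) b) (update t.2.2 (m+1) c) (m+1) = (r : ℤ) := by
    rw [hsucc, hcong m le_rfl]; omega
  refine ⟨⟨?_, ?_, ?_, ?_⟩, hsum⟩
  · intro i hi
    simp only [Finset.mem_Icc] at hi
    have hne : i ≠ m + 1 := by omega
    have hni : i ∉ Finset.Icc 1 m := by simp only [Finset.mem_Icc]; omega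
    rw [Function.update_of_ne hne, Function.update_of_ne hne, Function.update_of_ne hne]
    exact hd.1 i hni
  · intro i hi
    simp only [Finset.mem_Icc] at hi
    by_cases hie : i = m + 1
    · subst hie; simp [hb, hc]
    · rw [Function.update_of_ne hie, Function.update_of_ne hie]
      exact hd.2.1 i (by simp only [Finset.mem_Icc]; omega)
  · intro i hi
    simp only [Finset.mem_Icc] at hi
    by_cases hie : i = m + 1
    · subst hie; rw [hsucc]; omega
    · rw [hcong i (by omega)]
      exact hd.2.2.1 i (by simp only [Finset.mem_Icc]; omega)
  · intro i hi
    simp only [Finset.mem_Icc] at hi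
    by_cases hie : i = m + 1
    · subst hie
      rw [Function.update_self]
      simpa [Nat.add_sub_cancel, hsum] using (by exact_mod_cast ha : (a:ℤ) ≤ (r:ℤ))
    · rw [Function.update_of_ne hie, hcong i (by omega), hcong (i-1) (by omega)]
      exact hd.2.2.2 i (by simp only [Finset.mem_Icc]; omega)

open Function in
lemma trunc_mem (m : ℕ) (r : ℤ) (b c : ℕ) (t : Triple)
    (hd : IsBDatum (m+1) t.1 t.2.1 t.2.2)
    (hs : bHeight t.2.1 t.2.2 m + bHeight t.2.1 t.2.2 (m+1) = r)
    (hbn : t.2.1 (m+1) = b) (hcn : t.2.2 (m+1) = c) :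
    IsBDatum m (update t.1 (m+1) 0) (update t.2.1 (m+1) 0) (update t.2.2 (m+1) 0) ∧
    2 * bHeight (update t.2.1 (m+1) 0) (update t.2.2 (m+1) 0) m = r - (1 - (b:ℤ) - (c:ℤ)) ∧
    (t.1 (m+1) : ℤ) ≤ r := by
  have hcong : ∀ i, i ≤ m → bHeight (update t.2.1 (m+1) 0) (update t.2.2 (m+1) 0) i
      = bHeight t.2.1 t.2.2 i := by
    intro i hi
    refine bHeight_congr i fun j hj1 hj2 => ?_
    constructor <;> rw [Function.update_of_ne (by omega)]
  have hrec := bHeight_succ t.2.1 t.2.2 m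
  rw [hbn, hcn] at hrec
  refine ⟨⟨?_, ?_, ?_, ?_⟩, ?_, ?_⟩
  · intro i hi
    simp only [Finset.mem_Icc] at hi
    by_cases hie : i = m + 1
    · subst hie; simp
    · rw [Function.update_of_ne hie, Function.update_of_ne hie, Function.update_of_ne hie]
      exact hd.1 i (by simp only [Finset.mem_Icc]; omega)
  · intro i hi
    simp only [Finset.mem_Icc] at hi
    have hie : i ≠ m + 1 := by omega
    rw [Function.update_of_ne hie, Function.update_of_ne hie]
    exact hd.2.1 i (by simp only [Finset.mem_Icc]; omega)
  · intro i hi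
    simp only [Finset.mem_Icc] at hi
    rw [hcong i (by omega)]
    exact hd.2.2.1 i (by simp only [Finset.mem_Icc]; omega)
  · intro i hi
    simp only [Finset.mem_Icc] at hi
    have hie : i ≠ m + 1 := by omega
    rw [Function.update_of_ne hie, hcong i (by omega), hcong (i-1) (by omega)]
    exact hd.2.2.2 i (by simp only [Finset.mem_Icc]; omega)
  · rw [hcong m le_rfl]; omega
  · have := hd.2.2.2 (m+1) (by simp)
    simpa [Nat.add_sub_cancel, hs] using this

def TT (n : ℕ) (r : ℤ) (b c : ℕ) : Set Triple :=
  {t | IsBDatum n t.1 t.2.1 t.2.2 ∧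
    bHeight t.2.1 t.2.2 (n - 1) + bHeight t.2.1 t.2.2 n = r ∧
    t.2.1 n = b ∧ t.2.2 n = c}

def TT' (m : ℕ) (s : ℤ) : Set Triple :=
  {t | IsBDatum m t.1 t.2.1 t.2.2 ∧ 2 * bHeight t.2.1 t.2.2 m = s}

open Function in
lemma master (m : ℕ) (hm : 1 ≤ m) (r : ℕ) (b c : ℕ) (hb : b ≤ 1) (hc : c ≤ 1) :
    (TT (m+1) (r : ℤ) b c).ncard
      = (r + 1) * (TT' m ((r : ℤ) - (1 - (b:ℤ) - (c:ℤ)))).ncard := by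
  have hmm : m + 1 - 1 = m := rfl
  set T : Set Triple := TT (m+1) (r : ℤ) b c with hT
  set T' : Set Triple := TT' m ((r : ℤ) - (1 - (b:ℤ) - (c:ℤ))) with hT'
  have hGmem : ∀ (a : ℕ), a ≤ r → ∀ t ∈ T',
      (update t.1 (m+1) a, update t.2.1 (m+1) b, update t.2.2 (m+1) c) ∈ T := by
    intro a ha t ht
    obtain ⟨hd, hh⟩ := ht
    have h := ext_mem m hm r b c hb hc a ha t hd hh
    exact ⟨h.1, by rw [hmm]; exact h.2, by simp, by simp⟩
  let G : Fin (r+1) × T' → T := fun p =>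
    ⟨(update p.2.1.1 (m+1) p.1.1, update p.2.1.2.1 (m+1) b, update p.2.1.2.2 (m+1) c),
      hGmem p.1.1 (Nat.lt_succ_iff.1 p.1.2) p.2.1 p.2.2⟩
  have hinj : Function.Injective G := by
    rintro ⟨a, t, ht⟩ ⟨a2, t2, ht2⟩ h
    simp only [G, Subtype.mk.injEq, Prod.mk.injEq] at h
    obtain ⟨h1, h2, h3⟩ := h
    have hn1 : (m+1) ∉ Finset.Icc 1 m := by simp
    have ea : a = a2 := by
      have := congrFun h1 (m+1)
      simp only [Function.update_self] at this
      exact Fin.ext this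
    have e1 : t.1 = t2.1 := by
      funext i
      by_cases hie : i = m + 1
      · subst hie; rw [(ht.1.1 _ hn1).1, (ht2.1.1 _ hn1).1]
      · have := congrFun h1 i
        rwa [Function.update_of_ne hie, Function.update_of_ne hie] at this
    have e2 : t.2.1 = t2.2.1 := by
      funext i
      by_cases hie : i = m + 1
      · subst hie; rw [(ht.1.1 _ hn1).2.1, (ht2.1.1 _ hn1).2.1]
      · have := congrFun h2 i
        rwa [Function.update_of_ne hie, Function.update_of_ne hie] at this
    have e3 : t.2.2 = t2.2.2 := by
      funext i
      by_cases hie : i = m + 1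
      · subst hie; rw [(ht.1.1 _ hn1).2.2, (ht2.1.1 _ hn1).2.2]
      · have := congrFun h3 i
        rwa [Function.update_of_ne hie, Function.update_of_ne hie] at this
    have : t = t2 := Prod.ext_iff.2 ⟨e1, Prod.ext_iff.2 ⟨e2, e3⟩⟩
    subst this; subst ea; rfl
  have hsurj : Function.Surjective G := by
    rintro ⟨t, ht⟩
    obtain ⟨hd, hs, hbn, hcn⟩ := ht
    rw [hmm] at hs
    obtain ⟨hd', hh', hle⟩ := trunc_mem m (r:ℤ) b c t hd hs hbn hcn
    have ha : t.1 (m+1) ≤ r := by exact_mod_cast hle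
    refine ⟨⟨⟨t.1 (m+1), Nat.lt_succ_of_le ha⟩,
      ⟨(update t.1 (m+1) 0, update t.2.1 (m+1) 0, update t.2.2 (m+1) 0), hd', hh'⟩⟩, ?_⟩
    simp only [G, Subtype.mk.injEq]
    apply Subtype.ext
    refine Prod.ext_iff.2 ⟨?_, Prod.ext_iff.2 ⟨?_, ?_⟩⟩ <;>
    · funext i
      by_cases hie : i = m + 1
      · subst hie; simp [hbn, hcn]
      · simp [Function.update_of_ne hie]
  have hcard : Nat.card T = Nat.card (Fin (r+1) × T') :=
    (Nat.card_congr (Equiv.ofBijective G ⟨hinj, hsurj⟩)).symm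
  rw [← Nat.card_coe_set_eq, ← Nat.card_coe_set_eq, hcard, Nat.card_prod,
    Nat.card_eq_fintype_card, Fintype.card_fin]

lemma decomp (k : ℕ) (s : ℤ) :
    (TT' (k+1) s).ncard = pE (k+1) s + pU (k+1) (s-1) + pD (k+1) (s+1) := by
  set SE : Set Triple := {t | IsBDatum (k+1) t.1 t.2.1 t.2.2 ∧
    bHeight t.2.1 t.2.2 k + bHeight t.2.1 t.2.2 (k+1) = s ∧
    t.2.1 (k+1) + t.2.2 (k+1) = 1} with hSE
  set SU : Set Triple := {t | IsBDatum (k+1) t.1 t.2.1 t.2.2 ∧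
    bHeight t.2.1 t.2.2 k + bHeight t.2.1 t.2.2 (k+1) = s - 1 ∧
    t.2.1 (k+1) = 0 ∧ t.2.2 (k+1) = 0} with hSU
  set SD : Set Triple := {t | IsBDatum (k+1) t.1 t.2.1 t.2.2 ∧
    bHeight t.2.1 t.2.2 k + bHeight t.2.1 t.2.2 (k+1) = s + 1 ∧
    t.2.1 (k+1) = 1 ∧ t.2.2 (k+1) = 1} with hSD
  have hpE : pE (k+1) s = SE.ncard := rfl
  have hpU : pU (k+1) (s-1) = SU.ncard := rfl
  have hpD : pD (k+1) (s+1) = SD.ncard := rfl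
  have hset : TT' (k+1) s = SE ∪ (SU ∪ SD) := by
    ext t
    simp only [TT', hSE, hSU, hSD, Set.mem_setOf_eq, Set.mem_union]
    constructor
    · rintro ⟨hd, h2⟩
      have hb := (hd.2.1 (k+1) (by simp)).1
      have hc := (hd.2.1 (k+1) (by simp)).2
      have hrec := bHeight_succ t.2.1 t.2.2 k
      interval_cases hβ : t.2.1 (k+1) <;> interval_cases hγ : t.2.2 (k+1) <;>
        simp only [Nat.cast_zero, Nat.cast_one] at hrec
      · exact Or.inr (Or.inl ⟨hd, by omega, rfl, rfl⟩)
      · exact Or.inl ⟨hd, by omega, rfl⟩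
      · exact Or.inl ⟨hd, by omega, rfl⟩
      · exact Or.inr (Or.inr ⟨hd, by omega, rfl, rfl⟩)
    · have hrec := bHeight_succ t.2.1 t.2.2 k
      rintro (⟨hd, h2, h3⟩ | ⟨hd, h2, h3, h4⟩ | ⟨hd, h2, h3, h4⟩)
      · refine ⟨hd, ?_⟩
        have : (t.2.1 (k+1) : ℤ) + (t.2.2 (k+1) : ℤ) = 1 := by exact_mod_cast h3
        omega
      · rw [h3, h4] at hrec
        simp only [Nat.cast_zero] at hrec
        exact ⟨hd, by omega⟩
      · rw [h3, h4] at hrec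
        simp only [Nat.cast_one] at hrec
        exact ⟨hd, by omega⟩
  have hfin : ∀ X : Set Triple, X ⊆ {t : Triple | IsBDatum (k+1) t.1 t.2.1 t.2.2} → X.Finite :=
    fun X hX => Set.Finite.subset (bDatum_finite (k+1)) hX
  have hfE : SE.Finite := hfin _ fun t ht => ht.1
  have hfU : SU.Finite := hfin _ fun t ht => ht.1
  have hfD : SD.Finite := hfin _ fun t ht => ht.1
  have hdisj1 : Disjoint SU SD := by
    rw [Set.disjoint_left]
    rintro t ⟨_, _, h1, _⟩ ⟨_, _, h2, _⟩
    omega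
  have hdisj2 : Disjoint SE (SU ∪ SD) := by
    rw [Set.disjoint_left]
    rintro t ⟨_, _, h1⟩ (⟨_, _, h2, h3⟩ | ⟨_, _, h2, h3⟩) <;> omega
  rw [hset, Set.ncard_union_eq hdisj2 hfE (hfU.union hfD),
    Set.ncard_union_eq hdisj1 hfU hfD, hpE, hpU, hpD]
  omega


/-- The recurrences for `pE`, `pU`, `pD` (with negative arguments giving `0`). -/
theorem pE_pU_pD_recurrence (n : ℕ) (hn : 2 ≤ n) (r : ℕ) :
    pE n r = 2 * (r + 1) *
        (pE (n - 1) r + pU (n - 1) ((r : ℤ) - 1) + pD (n - 1) ((r : ℤ) + 1)) ∧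
    pU n r = (r + 1) *
        (pE (n - 1) ((r : ℤ) - 1) + pU (n - 1) ((r : ℤ) - 2) + pD (n - 1) r) ∧
    pD n r = (r + 1) *
        (pE (n - 1) ((r : ℤ) + 1) + pU (n - 1) r + pD (n - 1) ((r : ℤ) + 2)) := by
  obtain ⟨k, rfl⟩ : ∃ k, n = k + 2 := ⟨n - 2, by omega⟩
  have key : ∀ (b c : ℕ), b ≤ 1 → c ≤ 1 →
      (TT (k+2) (r:ℤ) b c).ncard
        = (r + 1) * (TT' (k+1) ((r:ℤ) - (1 - (b:ℤ) - (c:ℤ)))).ncard :=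
    fun b c hb hc => master (k+1) (by omega) r b c hb hc
  refine ⟨?_, ?_, ?_⟩
  · -- pE
    have hsplit : {t : (ℕ → ℕ) × (ℕ → ℕ) × (ℕ → ℕ) | IsBDatum (k+2) t.1 t.2.1 t.2.2 ∧
        bHeight t.2.1 t.2.2 (k+2-1) + bHeight t.2.1 t.2.2 (k+2) = (r:ℤ) ∧
        t.2.1 (k+2) + t.2.2 (k+2) = 1}
        = TT (k+2) (r:ℤ) 1 0 ∪ TT (k+2) (r:ℤ) 0 1 := by
      ext t
      simp only [TT, Set.mem_setOf_eq, Set.mem_union]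
      constructor
      · rintro ⟨hd, hs, he⟩
        have hb := (hd.2.1 (k+2) (by simp)).1
        have hc := (hd.2.1 (k+2) (by simp)).2
        have : (t.2.1 (k+2) = 1 ∧ t.2.2 (k+2) = 0) ∨
            (t.2.1 (k+2) = 0 ∧ t.2.2 (k+2) = 1) := by omega
        rcases this with h | h
        · exact Or.inl ⟨hd, hs, h.1, h.2⟩
        · exact Or.inr ⟨hd, hs, h.1, h.2⟩
      · rintro (⟨hd, hs, h1, h2⟩ | ⟨hd, hs, h1, h2⟩) <;> exact ⟨hd, hs, by omega⟩
    have hdisj : Disjoint (TT (k+2) (r:ℤ) 1 0) (TT (k+2) (r:ℤ) 0 1) := by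
      rw [Set.disjoint_left]
      rintro t ⟨_, _, h1, _⟩ ⟨_, _, h2, _⟩
      omega
    have hf1 : (TT (k+2) (r:ℤ) 1 0).Finite :=
      Set.Finite.subset (bDatum_finite (k+2)) fun t ht => ht.1
    have hf2 : (TT (k+2) (r:ℤ) 0 1).Finite :=
      Set.Finite.subset (bDatum_finite (k+2)) fun t ht => ht.1
    have h1 := key 1 0 le_rfl (by norm_num)
    have h2 := key 0 1 (by norm_num) le_rfl
    rw [show ((r:ℤ) - (1 - ((1:ℕ):ℤ) - ((0:ℕ):ℤ))) = (r:ℤ) by push_cast; ring] at h1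
    rw [show ((r:ℤ) - (1 - ((0:ℕ):ℤ) - ((1:ℕ):ℤ))) = (r:ℤ) by push_cast; ring] at h2
    have : pE (k+2) (r:ℤ) = (TT (k+2) (r:ℤ) 1 0 ∪ TT (k+2) (r:ℤ) 0 1).ncard := by
      rw [← hsplit]; rfl
    rw [this, Set.ncard_union_eq hdisj hf1 hf2, h1, h2, decomp k (r:ℤ),
      show k+2-1 = k+1 from rfl]
    ring
  · -- pU
    have h := key 0 0 (by norm_num) (by norm_num)
    rw [show ((r:ℤ) - (1 - ((0:ℕ):ℤ) - ((0:ℕ):ℤ))) = (r:ℤ) - 1 by push_cast; ring] at h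
    have : pU (k+2) (r:ℤ) = (TT (k+2) (r:ℤ) 0 0).ncard := rfl
    rw [this, h, decomp k ((r:ℤ) - 1),
      show (r:ℤ) - 1 - 1 = (r:ℤ) - 2 by ring, show (r:ℤ) - 1 + 1 = (r:ℤ) by ring, show k+2-1 = k+1 from rfl]
  · -- pD
    have h := key 1 1 le_rfl le_rfl
    rw [show ((r:ℤ) - (1 - ((1:ℕ):ℤ) - ((1:ℕ):ℤ))) = (r:ℤ) + 1 by push_cast; ring] at h
    have : pD (k+2) (r:ℤ) = (TT (k+2) (r:ℤ) 1 1).ncard := rfl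
    rw [this, h, decomp k ((r:ℤ) + 1),
      show (r:ℤ) + 1 - 1 = (r:ℤ) by ring, show (r:ℤ) + 1 + 1 = (r:ℤ) + 2 by ring, show k+2-1 = k+1 from rfl]
end
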